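/- arXiv:2402.08693 — 2 statements merged into one kernel-verified Lean document; each statement's English description precedes it below -/
import Mathlib

section
/- For every real number w with w > 1/4, Σ_{n=0}^∞ 1 / (w^{n+1} · C(2n, n) · (2n+1)) = ∫_0^1 1/(w - x(1-x)) dx = 4 · arctan(1/√(4w - 1)) / √(4w - 1), where the series converges absolutely. -/
/-!
Expand `1 / (w - x (1 - x))` as the geometric series `∑ (x (1 - x))ⁿ / wⁿ⁺¹`. On `[0, 1]` it is
dominated by `∑ (1/4)ⁿ / wⁿ⁺¹ < ∞`, since `x (1 - x) ≤ 1/4 < w`, so it may be integrated termwise,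
and the Beta integrals `∫₀¹ xⁿ (1 - x)ⁿ dx = n!² / (2n + 1)! = 1 / (C(2n, n) (2n + 1))` give the
series. The integral itself is elementary: `w - x (1 - x) = (s² + (2x - 1)²) / 4` with
`s = √(4w - 1)`, so `(2 / s) arctan ((2x - 1) / s)` is an antiderivative.
-/

open Real intervalIntegral
open scoped Nat

theorem integral_pow_mul_one_sub_pow (k m : ℕ) :
    ∫ x in (0:ℝ)..1, x ^ k * (1 - x) ^ m = (k ! * m ! / (k + m + 1)! : ℝ) := by
  have hbeta : Complex.betaIntegral (k + 1) (m + 1) =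
      ((∫ x in (0:ℝ)..1, x ^ k * (1 - x) ^ m : ℝ) : ℂ) := by
    rw [Complex.betaIntegral, ← integral_ofReal]
    simp only [add_sub_cancel_right, Complex.cpow_natCast]
    push_cast
    rfl
  have hG := Complex.Gamma_mul_Gamma_eq_betaIntegral (s := k + 1) (t := m + 1)
    (by simp; positivity) (by simp; positivity)
  rw [hbeta, show (k + 1 + (m + 1) : ℂ) = ((k + m + 1 : ℕ) : ℂ) + 1 by push_cast; ring,
    Complex.Gamma_nat_eq_factorial, Complex.Gamma_nat_eq_factorial,
    Complex.Gamma_nat_eq_factorial] at hG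
  have hG' : (k ! * m ! : ℝ) = (k + m + 1)! * ∫ x in (0:ℝ)..1, x ^ k * (1 - x) ^ m := by
    exact_mod_cast hG
  rw [hG', mul_div_cancel_left₀ _ (by positivity)]

theorem integral_mul_one_sub_pow (n : ℕ) :
    ∫ x in (0:ℝ)..1, (x * (1 - x)) ^ n = 1 / ((2 * n).choose n * (2 * n + 1) : ℝ) := by
  have hfac : ((n + n + 1)! : ℝ) = (2 * n).choose n * (2 * n + 1) * (n ! * n !) := by
    rw [Nat.factorial_succ, ← Nat.add_choose_mul_factorial_mul_factorial, ← two_mul]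
    push_cast
    ring
  simp_rw [mul_pow, integral_pow_mul_one_sub_pow, hfac]
  field_simp

theorem hasSum_pow_div_pow_succ {t w : ℝ} (h : |t| < w) :
    HasSum (fun n : ℕ => t ^ n / w ^ (n + 1)) (1 / (w - t)) := by
  have hw : 0 < w := (abs_nonneg t).trans_lt h
  have hr : |t / w| < 1 := by rwa [abs_div, abs_of_pos hw, div_lt_one hw]
  have hwt : w - t ≠ 0 := by linarith [le_abs_self t]
  have hterm : (fun n : ℕ => (t / w) ^ n / w) = fun n => t ^ n / w ^ (n + 1) := by
    ext n
    rw [div_pow, pow_succ]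
    field_simp
  have hsum : (1 - t / w)⁻¹ / w = 1 / (w - t) := by field_simp
  simpa only [hterm, hsum] using (hasSum_geometric_of_abs_lt_one hr).div_const w

theorem mul_one_sub_le_quarter (x : ℝ) : x * (1 - x) ≤ 1 / 4 := by
  nlinarith [sq_nonneg (2 * x - 1)]

theorem hasSum_one_div_pow_mul_choose_mul {w : ℝ} (hw : 1 / 4 < w) :
    HasSum (fun n : ℕ => 1 / (w ^ (n + 1) * (2 * n).choose n * (2 * n + 1)))
      (∫ x in (0:ℝ)..1, 1 / (w - x * (1 - x))) := by
  have hterm (n : ℕ) : 1 / (w ^ (n + 1) * (2 * n).choose n * (2 * n + 1)) =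
      ∫ x in (0:ℝ)..1, (x * (1 - x)) ^ n / w ^ (n + 1) := by
    rw [integral_div, integral_mul_one_sub_pow, div_div, mul_assoc, mul_comm]
  simp_rw [hterm]
  have hquarter : |(1 / 4 : ℝ)| < w := by rwa [abs_of_pos (by norm_num)]
  refine hasSum_integral_of_dominated_convergence
    (fun n _ => (1 / 4) ^ n / w ^ (n + 1)) (fun n => by fun_prop)
    (fun n => .of_forall fun x hx => ?_)
    (.of_forall fun _ _ => (hasSum_pow_div_pow_succ hquarter).summable)
    intervalIntegrable_const (.of_forall fun x hx => hasSum_pow_div_pow_succ ?_)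
  all_goals
    rw [Set.uIoc_of_le zero_le_one] at hx
    have habs : |x * (1 - x)| ≤ 1 / 4 := by
      rw [abs_of_nonneg (mul_nonneg hx.1.le (sub_nonneg.2 hx.2))]
      exact mul_one_sub_le_quarter x
  · rw [norm_div, norm_pow, norm_pow, Real.norm_eq_abs, Real.norm_of_nonneg (by linarith)]
    gcongr
  · linarith

theorem hasDerivAt_arctan_two_mul_sub_one_div {w : ℝ} (hw : 1 / 4 < w) (x : ℝ) :
    HasDerivAt (fun x => 2 / √(4 * w - 1) * arctan ((2 * x - 1) / √(4 * w - 1)))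
      (1 / (w - x * (1 - x))) x := by
  set s := √(4 * w - 1)
  have hs : 0 < s := Real.sqrt_pos.2 (by linarith)
  have hs2 : s ^ 2 = 4 * w - 1 := Real.sq_sqrt (by linarith)
  have hinner : HasDerivAt (fun x => (2 * x - 1) / s) (2 / s) x := by
    simpa using (((hasDerivAt_id x).const_mul 2).sub_const 1).div_const s
  refine (((hasDerivAt_arctan _).comp x hinner).const_mul (2 / s)).congr_deriv ?_
  have hden : w - x * (1 - x) = (s ^ 2 + (2 * x - 1) ^ 2) / 4 := by
    rw [hs2]; ring
  rw [hden, div_pow]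
  field_simp
  ring

theorem integral_one_div_sub_mul_one_sub {w : ℝ} (hw : 1 / 4 < w) :
    ∫ x in (0:ℝ)..1, 1 / (w - x * (1 - x)) =
      4 * arctan (1 / √(4 * w - 1)) / √(4 * w - 1) := by
  have hne (x : ℝ) : w - x * (1 - x) ≠ 0 := by linarith [mul_one_sub_le_quarter x]
  rw [integral_eq_sub_of_hasDerivAt (fun x _ => hasDerivAt_arctan_two_mul_sub_one_div hw x)
    (Continuous.intervalIntegrable (by fun_prop (disch := exact hne _)) _ _)]
  rw [show (2 * (1:ℝ) - 1) = 1 by norm_num, show (2 * (0:ℝ) - 1) = -1 by norm_num, neg_div,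
    arctan_neg]
  ring

theorem stmt8 (w : ℝ) (hw : w > 1 / 4) :
    Summable (fun n : ℕ =>
      |1 / (w ^ (n + 1) * (Nat.choose (2 * n) n : ℝ) * (2 * (n : ℝ) + 1))|) ∧
    (∑' n : ℕ, 1 / (w ^ (n + 1) * (Nat.choose (2 * n) n : ℝ) * (2 * (n : ℝ) + 1)) =
      ∫ x in (0:ℝ)..1, 1 / (w - x * (1 - x))) ∧
    (∫ x in (0:ℝ)..1, 1 / (w - x * (1 - x))) =
      4 * Real.arctan (1 / Real.sqrt (4 * w - 1)) / Real.sqrt (4 * w - 1) := by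
  have h := hasSum_one_div_pow_mul_choose_mul hw
  exact ⟨h.summable.abs, h.tsum_eq, integral_one_div_sub_mul_one_sub hw⟩
end

section
/- For every real number h with 0 < h < 1, h(h+1) · 2^{2h-1} · (Γ(h))² / Γ(2h) = Σ_{n=0}^∞ (1-h)_n · (2h)_n · (3n + 3h + 1) / ((-8)^n · (h/2 + 1)_n · (h/2 + 3/2)_n), where the series converges absolutely. -/
open Real

/-- Rising factorial (Pochhammer symbol): `(a)_n = ∏_{i=0}^{n-1} (a + i)`. -/
noncomputable def risingFactorial (a : ℝ) (n : ℕ) : ℝ := ∏ i ∈ Finset.range n, (a + i)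

/-!
By the duplication formula `4ⁿ (a)ₙ (a + 1/2)ₙ = (2a)₂ₙ` the `n`-th term equals
`(-1/2)ⁿ (2h)ₙ (1-h)ₙ (3n+3h+1) / (h+2)₂ₙ`. Splitting `3n+3h+1 = (h+1+2n) + (2h+n)` turns it
into a sum of two Beta values, i.e. a constant times the moment
`∫₀¹ x^(2h-1) (1-x)^(-h) (1+x) (-x(1-x)/2)ⁿ dx`. Since `|x(1-x)/2| ≤ 1/8`, the geometric series
may be summed under the integral, and `(1+x)(2-x) = 2 + x(1-x)` leaves
`2 ∫₀¹ x^(2h-1) (1-x)^(-h) / (2-x) dx`. The substitution `u = (x/(2-x))²` maps this integral to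
`4^(h-1) B(h, 1-h)`, and `Γ(1-h)` cancels against the constant.
-/

open Set MeasureTheory

theorem risingFactorial_succ (a : ℝ) (n : ℕ) :
    risingFactorial a (n + 1) = risingFactorial a n * (a + n) :=
  Finset.prod_range_succ _ _

theorem Gamma_add_natCast {a : ℝ} (ha : ∀ m : ℕ, a ≠ -m) (n : ℕ) :
    Gamma (a + n) = risingFactorial a n * Gamma a := by
  induction n with
  | zero => simp [risingFactorial]
  | succ n ih =>
    have hne : a + n ≠ 0 := fun h => ha n (by linarith)
    rw [Nat.cast_succ, ← add_assoc, Gamma_add_one hne, ih, risingFactorial_succ]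
    ring

theorem risingFactorial_eq_Gamma_div {a : ℝ} (ha : 0 < a) (n : ℕ) :
    risingFactorial a n = Gamma (a + n) / Gamma a := by
  rw [Gamma_add_natCast (fun m => by linarith [(m.cast_nonneg : (0 : ℝ) ≤ m)]),
    mul_div_cancel_right₀ _ (Gamma_pos_of_pos ha).ne']

theorem four_pow_mul_risingFactorial_mul_risingFactorial_add_half (a : ℝ) (n : ℕ) :
    4 ^ n * (risingFactorial a n * risingFactorial (a + 1 / 2) n) =
      risingFactorial (2 * a) (2 * n) := by
  induction n with
  | zero => simp [risingFactorial]
  | succ n ih =>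
    rw [show 2 * (n + 1) = 2 * n + 1 + 1 by ring, risingFactorial_succ (2 * a) (2 * n + 1),
      risingFactorial_succ (2 * a) (2 * n), ← ih, risingFactorial_succ, risingFactorial_succ]
    push_cast
    ring

theorem ofReal_rpow_mul_one_sub_rpow {a b x : ℝ} (hx : x ∈ Ioo (0 : ℝ) 1) :
    ((x ^ (a - 1) * (1 - x) ^ (b - 1) : ℝ) : ℂ) =
      (x : ℂ) ^ ((a : ℂ) - 1) * (1 - (x : ℂ)) ^ ((b : ℂ) - 1) := by
  rw [Complex.ofReal_mul, Complex.ofReal_cpow hx.1.le, Complex.ofReal_cpow (sub_nonneg.2 hx.2.le)]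
  push_cast
  rfl

theorem integrableOn_rpow_mul_one_sub_rpow {a b : ℝ} (ha : 0 < a) (hb : 0 < b) :
    IntegrableOn (fun x : ℝ => x ^ (a - 1) * (1 - x) ^ (b - 1)) (Ioo 0 1) := by
  have hc := Complex.betaIntegral_convergent (u := a) (v := b) (by simpa) (by simpa)
  rw [intervalIntegrable_iff_integrableOn_Ioo_of_le zero_le_one] at hc
  refine IntegrableOn.congr_fun hc.re (fun x hx => ?_) measurableSet_Ioo
  simp [← ofReal_rpow_mul_one_sub_rpow hx]

theorem integral_rpow_mul_one_sub_rpow {a b : ℝ} (ha : 0 < a) (hb : 0 < b) :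
    ∫ x in Ioo (0 : ℝ) 1, x ^ (a - 1) * (1 - x) ^ (b - 1) = Gamma a * Gamma b / Gamma (a + b) := by
  have hbeta : Complex.betaIntegral a b =
      ((∫ x in Ioo (0 : ℝ) 1, x ^ (a - 1) * (1 - x) ^ (b - 1) : ℝ) : ℂ) := by
    rw [Complex.betaIntegral, intervalIntegral.integral_of_le zero_le_one,
      integral_Ioc_eq_integral_Ioo, ← integral_complex_ofReal]
    exact setIntegral_congr_fun measurableSet_Ioo fun x hx => (ofReal_rpow_mul_one_sub_rpow hx).symm
  have key := Complex.Gamma_mul_Gamma_eq_betaIntegral (s := a) (t := b) (by simpa) (by simpa)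
  rw [hbeta, ← Complex.ofReal_add, Complex.Gamma_ofReal, Complex.Gamma_ofReal,
    Complex.Gamma_ofReal, ← Complex.ofReal_mul, ← Complex.ofReal_mul, Complex.ofReal_inj] at key
  rw [key, mul_div_cancel_left₀ _ (Gamma_pos_of_pos (add_pos ha hb)).ne']

theorem integral_rpow_mul_one_sub_rpow_mul_pow {a b : ℝ} (ha : 0 < a) (hb : 0 < b) (n : ℕ) :
    ∫ x in Ioo (0 : ℝ) 1, x ^ (a - 1) * (1 - x) ^ (b - 1) * (x * (1 - x)) ^ n =
      Gamma (a + n) * Gamma (b + n) / Gamma (a + b + 2 * n) := by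
  have hpt : ∀ x ∈ Ioo (0 : ℝ) 1, x ^ (a - 1) * (1 - x) ^ (b - 1) * (x * (1 - x)) ^ n =
      x ^ ((a + n) - 1) * (1 - x) ^ ((b + n) - 1) := fun x hx => by
    rw [add_sub_right_comm a, add_sub_right_comm b, rpow_add hx.1, rpow_add (sub_pos.2 hx.2),
      rpow_natCast, rpow_natCast, mul_pow]
    ring
  rw [setIntegral_congr_fun measurableSet_Ioo hpt,
    integral_rpow_mul_one_sub_rpow (by positivity) (by positivity)]
  ring_nf

theorem risingFactorial_mul_div_eq_integral {a b : ℝ} (ha : 0 < a) (hb : 0 < b) (n : ℕ) :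
    risingFactorial a n * risingFactorial b n * (2 * a + b + 3 * n) /
        risingFactorial (a + b + 1) (2 * n) =
      Gamma (a + b + 1) / (Gamma a * Gamma b) *
        ∫ x in Ioo (0 : ℝ) 1, x ^ (a - 1) * (1 - x) ^ (b - 1) * (1 + x) * (x * (1 - x)) ^ n := by
  have hsplit : ∀ x ∈ Ioo (0 : ℝ) 1,
      x ^ (a - 1) * (1 - x) ^ (b - 1) * (1 + x) * (x * (1 - x)) ^ n =
        x ^ (a - 1) * (1 - x) ^ (b - 1) * (x * (1 - x)) ^ n +
          x ^ ((a + 1) - 1) * (1 - x) ^ (b - 1) * (x * (1 - x)) ^ n := fun x hx => by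
    rw [add_sub_right_comm, rpow_add_one hx.1.ne']
    ring
  have hint : ∀ c : ℝ, 0 < c → IntegrableOn
      (fun x : ℝ => x ^ (c - 1) * (1 - x) ^ (b - 1) * (x * (1 - x)) ^ n) (Ioo 0 1) := fun c hc =>
    (integrableOn_rpow_mul_one_sub_rpow hc hb).mul_continuousOn_of_subset (by fun_prop)
      measurableSet_Ioo isCompact_Icc Ioo_subset_Icc_self
  rw [setIntegral_congr_fun measurableSet_Ioo hsplit,
    integral_add (hint a ha) (hint (a + 1) (by linarith)),
    integral_rpow_mul_one_sub_rpow_mul_pow ha hb,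
    integral_rpow_mul_one_sub_rpow_mul_pow (by linarith) hb, risingFactorial_eq_Gamma_div ha,
    risingFactorial_eq_Gamma_div hb, risingFactorial_eq_Gamma_div (by linarith)]
  have hab : 0 < a + b + 2 * n := by positivity
  have hGa : Gamma (a + 1 + n) = (a + n) * Gamma (a + n) := by
    rw [add_right_comm, Gamma_add_one (by positivity)]
  have hGab : Gamma (a + 1 + b + 2 * n) = (a + b + 2 * n) * Gamma (a + b + 2 * n) := by
    rw [show a + 1 + b + 2 * n = (a + b + 2 * n) + 1 by ring, Gamma_add_one hab.ne']
  rw [hGa, hGab, show a + b + 1 + ((2 * n : ℕ) : ℝ) = (a + b + 2 * n) + 1 by push_cast; ring,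
    Gamma_add_one hab.ne']
  have := Gamma_pos_of_pos ha
  have := Gamma_pos_of_pos hb
  have := Gamma_pos_of_pos hab
  have := Gamma_pos_of_pos (show 0 < a + b + 1 by positivity)
  field_simp
  ring

theorem jacobian_sq_div_two_sub {a b x : ℝ} (hx : x ∈ Ioo (0 : ℝ) 1) :
    4 * x / (2 - x) ^ 3 * (((x / (2 - x)) ^ 2) ^ (a - 1) * (1 - (x / (2 - x)) ^ 2) ^ (b - 1)) =
      4 ^ b * (x ^ (2 * a - 1) * (1 - x) ^ (b - 1) * (2 - x) ^ (1 - 2 * a - 2 * b)) := by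
  obtain ⟨hx0, hx1⟩ := hx
  have hq : 0 < 2 - x := by linarith
  have hr : 0 < 1 - x := by linarith
  have hpow : ((x / (2 - x)) ^ 2) ^ (a - 1) = (x ^ (a - 1)) ^ 2 / ((2 - x) ^ (a - 1)) ^ 2 := by
    rw [div_pow, div_rpow (by positivity) (by positivity), ← rpow_pow_comm hx0.le,
      ← rpow_pow_comm hq.le]
  have hcompl : (1 - (x / (2 - x)) ^ 2) ^ (b - 1) =
      4 ^ (b - 1) * (1 - x) ^ (b - 1) / ((2 - x) ^ (b - 1)) ^ 2 := by
    rw [show 1 - (x / (2 - x)) ^ 2 = 4 * (1 - x) / (2 - x) ^ 2 by field_simp; ring,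
      div_rpow (by positivity) (by positivity), mul_rpow (by norm_num) hr.le,
      ← rpow_pow_comm hq.le]
  have hfour : (4 : ℝ) ^ b = 4 ^ (b - 1) * 4 := by
    rw [← rpow_add_one (by norm_num), sub_add_cancel]
  have hx_pow : x ^ (2 * a - 1) = (x ^ (a - 1)) ^ 2 * x := by
    rw [show 2 * a - 1 = (a - 1) * (2 : ℕ) + 1 by push_cast; ring, rpow_add_one hx0.ne',
      rpow_mul_natCast hx0.le]
  have hq_pow : (2 - x) ^ (1 - 2 * a - 2 * b) =
      (((2 - x) ^ (a - 1)) ^ 2 * ((2 - x) ^ (b - 1)) ^ 2 * (2 - x) ^ 3)⁻¹ := by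
    rw [show 1 - 2 * a - 2 * b = -((a - 1) * (2 : ℕ) + (b - 1) * (2 : ℕ) + (3 : ℕ)) by
        push_cast; ring,
      rpow_neg hq.le, rpow_add_natCast hq.ne', rpow_add hq, rpow_mul_natCast hq.le,
      rpow_mul_natCast hq.le]
  have : 0 < (2 - x) ^ (a - 1) := by positivity
  have : 0 < (2 - x) ^ (b - 1) := by positivity
  rw [hpow, hcompl, hfour, hx_pow, hq_pow]
  field_simp

theorem image_sq_div_two_sub_Ioo :
    (fun x : ℝ => (x / (2 - x)) ^ 2) '' Ioo 0 1 = Ioo 0 1 := by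
  refine Subset.antisymm ?_ ?_
  · rintro _ ⟨x, ⟨hx0, hx1⟩, rfl⟩
    have hq : 0 < 2 - x := by linarith
    exact ⟨by positivity, pow_lt_one₀ (by positivity) ((div_lt_one hq).2 (by linarith)) two_ne_zero⟩
  · have hcont : ContinuousOn (fun x : ℝ => (x / (2 - x)) ^ 2) (Icc 0 1) :=
      (continuousOn_id.div (by fun_prop) fun x hx => by linarith [hx.2]).pow 2
    have h := intermediate_value_Ioo zero_le_one hcont
    norm_num at h
    exact h

theorem injOn_sq_div_two_sub : InjOn (fun x : ℝ => (x / (2 - x)) ^ 2) (Ioo 0 1) := by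
  intro x ⟨hx0, hx1⟩ y ⟨hy0, hy1⟩ hxy
  have hqx : 0 < 2 - x := by linarith
  have hqy : 0 < 2 - y := by linarith
  have h := (pow_left_inj₀ (by positivity) (by positivity) two_ne_zero).1 hxy
  rw [div_eq_div_iff hqx.ne' hqy.ne'] at h
  linarith

theorem hasDerivAt_sq_div_two_sub {x : ℝ} (hx : x ≠ 2) :
    HasDerivAt (fun x : ℝ => (x / (2 - x)) ^ 2) (4 * x / (2 - x) ^ 3) x := by
  have hq : 2 - x ≠ 0 := sub_ne_zero.2 (Ne.symm hx)
  refine ((((hasDerivAt_id' x).div ((hasDerivAt_id' x).const_sub 2) hq).pow 2).congr_deriv ?_)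
  simp only [Pi.div_apply, Nat.cast_ofNat, Nat.add_one_sub_one, pow_one]
  field_simp
  ring

theorem integral_rpow_mul_one_sub_rpow_mul_two_sub_rpow {a b : ℝ} (ha : 0 < a) (hb : 0 < b) :
    ∫ x in Ioo (0 : ℝ) 1, x ^ (2 * a - 1) * (1 - x) ^ (b - 1) * (2 - x) ^ (1 - 2 * a - 2 * b) =
      Gamma a * Gamma b / (4 ^ b * Gamma (a + b)) := by
  have hderiv : ∀ x ∈ Ioo (0 : ℝ) 1, HasDerivWithinAt (fun x : ℝ => (x / (2 - x)) ^ 2)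
      (4 * x / (2 - x) ^ 3) (Ioo 0 1) x := fun x hx =>
    (hasDerivAt_sq_div_two_sub (by linarith [hx.2])).hasDerivWithinAt
  have hsubst := integral_image_eq_integral_abs_deriv_smul measurableSet_Ioo hderiv
    injOn_sq_div_two_sub fun u => u ^ (a - 1) * (1 - u) ^ (b - 1)
  have hpt : ∀ x ∈ Ioo (0 : ℝ) 1,
      |4 * x / (2 - x) ^ 3| • (((x / (2 - x)) ^ 2) ^ (a - 1) * (1 - (x / (2 - x)) ^ 2) ^ (b - 1)) =
        4 ^ b * (x ^ (2 * a - 1) * (1 - x) ^ (b - 1) * (2 - x) ^ (1 - 2 * a - 2 * b)) :=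
    fun x hx => by
      have : 0 < 2 - x := by linarith [hx.2]
      rw [smul_eq_mul, abs_of_pos (by have := hx.1; positivity), jacobian_sq_div_two_sub hx]
  rw [image_sq_div_two_sub_Ioo, integral_rpow_mul_one_sub_rpow ha hb,
    setIntegral_congr_fun measurableSet_Ioo hpt, integral_const_mul] at hsubst
  rw [mul_comm (4 ^ b), ← div_div, hsubst, mul_div_cancel_left₀ _ (by positivity)]

section GeometricSeries

variable {α : Type*} [MeasurableSpace α] {μ : Measure α} {f g : α → ℝ} {r : ℝ}

theorem integrable_mul_pow (hf : Integrable f μ) (hg : AEStronglyMeasurable g μ)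
    (hgr : ∀ᵐ x ∂μ, |g x| ≤ r) (hr : r < 1) (n : ℕ) :
    Integrable (fun x => f x * g x ^ n) μ :=
  hf.mul_bdd (hg.pow n) (hgr.mono fun x hx => by
    rw [norm_pow, Real.norm_eq_abs]
    exact pow_le_one₀ (abs_nonneg _) (hx.trans hr.le))

theorem summable_integral_norm_mul_pow (hf : Integrable f μ) (hg : AEStronglyMeasurable g μ)
    (hgr : ∀ᵐ x ∂μ, |g x| ≤ r) (hr₀ : 0 ≤ r) (hr : r < 1) :
    Summable fun n : ℕ => ∫ x, ‖f x * g x ^ n‖ ∂μ := by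
  refine Summable.of_nonneg_of_le (fun n => integral_nonneg fun x => norm_nonneg _) (fun n => ?_)
    ((summable_geometric_of_lt_one hr₀ hr).mul_left (∫ x, ‖f x‖ ∂μ))
  rw [← integral_mul_const]
  refine integral_mono_ae (integrable_mul_pow hf hg hgr hr n).norm (hf.norm.mul_const _) ?_
  filter_upwards [hgr] with x hx
  rw [norm_mul, norm_pow, Real.norm_eq_abs (g x)]
  exact mul_le_mul_of_nonneg_left (pow_le_pow_left₀ (abs_nonneg _) hx n) (norm_nonneg _)

theorem hasSum_integral_mul_pow (hf : Integrable f μ) (hg : AEStronglyMeasurable g μ)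
    (hgr : ∀ᵐ x ∂μ, |g x| ≤ r) (hr₀ : 0 ≤ r) (hr : r < 1) :
    HasSum (fun n : ℕ => ∫ x, f x * g x ^ n ∂μ) (∫ x, f x / (1 - g x) ∂μ) := by
  have hsum : ∀ᵐ x ∂μ, f x / (1 - g x) = ∑' n : ℕ, f x * g x ^ n := hgr.mono fun x hx => by
    rw [tsum_mul_left,
      tsum_geometric_of_norm_lt_one ((Real.norm_eq_abs _).trans_lt (hx.trans_lt hr)),
      div_eq_mul_inv]
  rw [integral_congr_ae hsum]
  exact hasSum_integral_of_summable_integral_norm (integrable_mul_pow hf hg hgr hr)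
    (summable_integral_norm_mul_pow hf hg hgr hr₀ hr)

end GeometricSeries

noncomputable def summand (h : ℝ) (n : ℕ) : ℝ :=
  risingFactorial (1 - h) n * risingFactorial (2 * h) n * (3 * (n : ℝ) + 3 * h + 1) /
    ((-8 : ℝ) ^ n * risingFactorial (h / 2 + 1) n * risingFactorial (h / 2 + 3 / 2) n)

theorem summand_eq_integral {h : ℝ} (h0 : 0 < h) (h1 : h < 1) (n : ℕ) :
    summand h n = Gamma (h + 2) / (Gamma (2 * h) * Gamma (1 - h)) *
      ∫ x in Ioo (0 : ℝ) 1,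
        x ^ (2 * h - 1) * (1 - x) ^ ((1 - h) - 1) * (1 + x) * (-(x * (1 - x)) / 2) ^ n := by
  have hden : (-8 : ℝ) ^ n * risingFactorial (h / 2 + 1) n * risingFactorial (h / 2 + 3 / 2) n =
      (-2) ^ n * risingFactorial (2 * h + (1 - h) + 1) (2 * n) := by
    rw [show 2 * h + (1 - h) + 1 = 2 * (h / 2 + 1) by ring,
      ← four_pow_mul_risingFactorial_mul_risingFactorial_add_half,
      show (-8 : ℝ) = -2 * 4 by norm_num, mul_pow, show h / 2 + 1 + 1 / 2 = h / 2 + 3 / 2 by ring]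
    ring
  have hnum : (3 * (n : ℝ) + 3 * h + 1) = 2 * (2 * h) + (1 - h) + 3 * n := by ring
  have hpow : ∀ x : ℝ,
      x ^ (2 * h - 1) * (1 - x) ^ ((1 - h) - 1) * (1 + x) * (-(x * (1 - x)) / 2) ^ n =
        x ^ (2 * h - 1) * (1 - x) ^ ((1 - h) - 1) * (1 + x) * (x * (1 - x)) ^ n * ((-2) ^ n)⁻¹ :=
    fun x => by rw [← inv_pow, mul_assoc _ ((x * (1 - x)) ^ n), ← mul_pow]; ring
  simp only [summand, hden, hnum, hpow, integral_mul_const]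
  rw [mul_comm (risingFactorial (1 - h) n), mul_comm ((-2 : ℝ) ^ n), ← div_div,
    risingFactorial_mul_div_eq_integral (by linarith) (by linarith),
    show 2 * h + (1 - h) + 1 = h + 2 by ring]
  ring

theorem integral_div_one_add_half_mul_one_sub {h : ℝ} (h0 : 0 < h) (h1 : h < 1) :
    ∫ x in Ioo (0 : ℝ) 1,
        x ^ (2 * h - 1) * (1 - x) ^ ((1 - h) - 1) * (1 + x) / (1 - -(x * (1 - x)) / 2) =
      2 * (Gamma h * Gamma (1 - h) / 4 ^ (1 - h)) := by
  have hpt : ∀ x ∈ Ioo (0 : ℝ) 1,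
      x ^ (2 * h - 1) * (1 - x) ^ ((1 - h) - 1) * (1 + x) / (1 - -(x * (1 - x)) / 2) =
        2 * (x ^ (2 * h - 1) * (1 - x) ^ ((1 - h) - 1) * (2 - x) ^ (1 - 2 * h - 2 * (1 - h))) :=
    fun x hx => by
      have : 0 < 2 - x := by linarith [hx.2]
      have : 0 < 1 + x := by linarith [hx.1]
      rw [show 1 - 2 * h - 2 * (1 - h) = -1 by ring, rpow_neg_one,
        show 1 - -(x * (1 - x)) / 2 = (2 - x) * (1 + x) / 2 by ring]
      field_simp
  rw [setIntegral_congr_fun measurableSet_Ioo hpt, integral_const_mul,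
    integral_rpow_mul_one_sub_rpow_mul_two_sub_rpow h0 (by linarith), add_sub_cancel, Gamma_one,
    mul_one]

theorem mul_rpow_mul_Gamma_sq_div_Gamma_two_mul {h : ℝ} (h0 : 0 < h) (h1 : h < 1) :
    h * (h + 1) * (2 : ℝ) ^ (2 * h - 1) * Gamma h ^ 2 / Gamma (2 * h) =
      Gamma (h + 2) / (Gamma (2 * h) * Gamma (1 - h)) *
        (2 * (Gamma h * Gamma (1 - h) / 4 ^ (1 - h))) := by
  have hGamma : Gamma (h + 2) = (h + 1) * h * Gamma h := by
    rw [show h + 2 = h + 1 + 1 by ring, Gamma_add_one (by linarith), Gamma_add_one h0.ne']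
    ring
  have hpow : (2 : ℝ) ^ (2 * h - 1) = 2 / 4 ^ (1 - h) := by
    rw [eq_div_iff (by positivity), show (4 : ℝ) = 2 ^ (2 : ℝ) by norm_num, ← rpow_mul zero_le_two,
      ← rpow_add two_pos, show 2 * h - 1 + 2 * (1 - h) = 1 by ring, rpow_one]
  have := Gamma_pos_of_pos (show 0 < 2 * h by linarith)
  have := Gamma_pos_of_pos (show 0 < 1 - h by linarith)
  rw [hGamma, hpow]
  field_simp

theorem stmt13 (h : ℝ) (h0 : 0 < h) (h1 : h < 1) :
    Summable (fun n : ℕ =>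
      |risingFactorial (1 - h) n * risingFactorial (2 * h) n * (3 * (n : ℝ) + 3 * h + 1) /
        ((-8 : ℝ) ^ n * risingFactorial (h / 2 + 1) n * risingFactorial (h / 2 + 3 / 2) n)|) ∧
    h * (h + 1) * (2 : ℝ) ^ (2 * h - 1) * (Real.Gamma h) ^ 2 / Real.Gamma (2 * h) =
      ∑' n : ℕ,
        risingFactorial (1 - h) n * risingFactorial (2 * h) n * (3 * (n : ℝ) + 3 * h + 1) /
          ((-8 : ℝ) ^ n * risingFactorial (h / 2 + 1) n * risingFactorial (h / 2 + 3 / 2) n) := by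
  change Summable (fun n => |summand h n|) ∧ _ = ∑' n, summand h n
  have hw : IntegrableOn
      (fun x : ℝ => x ^ (2 * h - 1) * (1 - x) ^ ((1 - h) - 1) * (1 + x)) (Ioo 0 1) :=
    (integrableOn_rpow_mul_one_sub_rpow (by linarith) (by linarith)).mul_continuousOn_of_subset
      (by fun_prop) measurableSet_Ioo isCompact_Icc Ioo_subset_Icc_self
  have hg : AEStronglyMeasurable (fun x : ℝ => -(x * (1 - x)) / 2) (volume.restrict (Ioo 0 1)) :=
    (by fun_prop : Continuous fun x : ℝ => -(x * (1 - x)) / 2).aestronglyMeasurable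
  have hgr : ∀ᵐ x ∂(volume.restrict (Ioo (0 : ℝ) 1)), |-(x * (1 - x)) / 2| ≤ 1 / 8 := by
    refine (ae_restrict_iff' measurableSet_Ioo).2 (Filter.Eventually.of_forall fun x hx => ?_)
    rw [abs_le]
    constructor <;> nlinarith [hx.1, hx.2, sq_nonneg (x - 1 / 2)]
  simp only [summand_eq_integral h0 h1]
  set C := Gamma (h + 2) / (Gamma (2 * h) * Gamma (1 - h))
  refine ⟨?_, ?_⟩
  · refine Summable.of_nonneg_of_le (fun n => abs_nonneg _) (fun n => ?_)
      ((summable_integral_norm_mul_pow hw hg hgr (by norm_num) (by norm_num)).mul_left |C|)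
    rw [abs_mul]
    exact mul_le_mul_of_nonneg_left
      ((Real.norm_eq_abs _).symm.trans_le (norm_integral_le_integral_norm _)) (abs_nonneg C)
  · rw [tsum_mul_left, (hasSum_integral_mul_pow hw hg hgr (by norm_num) (by norm_num)).tsum_eq,
      integral_div_one_add_half_mul_one_sub h0 h1]
    exact mul_rpow_mul_Gamma_sq_div_Gamma_two_mul h0 h1
end
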